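/- If all power sums x_k = μ_1^k + ... + μ_n^k (k = 1,...,n) of the roots of q(x) = x^n + q_1 x^{n-1} + ... + q_n are nonnegative reals, then the list of roots of Q(x) = x^n + n q_1 x^{n-1} + n(n-1) q_2 x^{n-2} + ... + n! q_n is the spectrum of an entrywise nonnegative n×n real matrix. -/

import Mathlib

/-!
Write `q_k = (-1)^k e_k(μ)`, so that `∏ (1 - μ_i t) = ∑ q_k t^k`, and let `a_m(X)` be the
coefficient of `t^m` in `exp (X t) ∏ (1 - μ_i t)`, that is
`a_m = ∑_{k ≤ m} q_k X^(m-k) / (m-k)!`, so that `n! a_n = Q`. Newton's identities say that the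
logarithmic derivative of `∏ (1 - μ_i t)` is `-∑ x_(d+1) t^d`, hence
`(m+1) a_(m+1) = X a_m - ∑_{j ≤ m} x_(m-j+1) a_j`. These are the rows of `(X - A) a = 0` for the
lower Hessenberg matrix `A` with `x_(i-j+1)` on and below the diagonal and `1, 2, …, n-1` on the
superdiagonal, except the last row, which leaves `n a_n`. Cramer's rule for the first unknown
`a_0 = 1` gives `det (X - A) = n! a_n = Q`, and `A ≥ 0` when all `x_k ≥ 0`.
-/

open Polynomial Matrix Finset
open scoped Nat PowerSeries

section Newton

variable {ι R : Type*} [Fintype ι] [CommRing R]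

def signedEsymm (μ : ι → R) (k : ℕ) : R := (-1) ^ k * (univ.val.map μ).esymm k

theorem signedEsymm_zero (μ : ι → R) : signedEsymm μ 0 = 1 := by
  simp [signedEsymm, Multiset.esymm]

theorem prod_X_sub_C_coeff_card_sub (μ : ι → R) {k : ℕ} (hk : k ≤ Fintype.card ι) :
    (∏ i, (X - C (μ i))).coeff (Fintype.card ι - k) = signedEsymm μ k := by
  have h := Multiset.prod_X_sub_C_coeff (univ.val.map μ) (k := Fintype.card ι - k) (by simp)
  rw [Multiset.map_map, prod_map_val] at h
  simpa [signedEsymm, Nat.sub_sub_self hk] using h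

theorem newton_signedEsymm (μ : ι → R) (k : ℕ) :
    (k + 1) * signedEsymm μ (k + 1) =
      -∑ p ∈ antidiagonal k, signedEsymm μ p.1 * ∑ i, μ i ^ (p.2 + 1) := by
  have h := MvPolynomial.mul_esymm_eq_sum ι R (k + 1)
  rw [sum_filter, Nat.sum_antidiagonal_succ', if_neg (lt_irrefl _), zero_add,
    sum_congr rfl fun p hp =>
      if_pos (by rw [HasAntidiagonal.mem_antidiagonal] at hp; dsimp only; omega)] at h
  replace h := congrArg (MvPolynomial.aeval μ) h
  simp only [map_mul, map_pow, map_neg, map_one, map_natCast, map_sum,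
    MvPolynomial.aeval_esymm_eq_multiset_esymm, MvPolynomial.psum, MvPolynomial.aeval_X] at h
  push_cast at h
  have hsign : (-1 : R) ^ (k + 1) * (-1) ^ (k + 1 + 1) = -1 := by
    rw [← pow_add]
    exact Odd.neg_one_pow ⟨k + 1, by ring⟩
  simp only [signedEsymm]
  linear_combination (-1) ^ (k + 1) * h + (∑ p ∈ antidiagonal k,
    (-1) ^ p.1 * (univ.val.map μ).esymm p.1 * ∑ i, μ i ^ (p.2 + 1)) * hsign

theorem derivative_mk_signedEsymm (μ : ι → R) :
    d⁄dX R (PowerSeries.mk (signedEsymm μ)) =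
      -(PowerSeries.mk (signedEsymm μ) * PowerSeries.mk fun d => ∑ i, μ i ^ (d + 1)) := by
  ext k
  simp [PowerSeries.coeff_derivative, PowerSeries.coeff_mul, mul_comm _ ((k : R) + 1),
    newton_signedEsymm]

end Newton

/-- Stated over an arbitrary coefficient ring because over `K[X]` the lemma `Derivation.leibniz`
synthesizes the algebra instance `PowerSeries.algebraPolynomial`, which is not the one
`PowerSeries.derivative` is built with. -/
theorem PowerSeries.derivative_mul {R : Type*} [CommSemiring R] (f g : PowerSeries R) :
    d⁄dX R (f * g) = f * d⁄dX R g + g * d⁄dX R f := by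
  simpa only [smul_eq_mul] using (d⁄dX R).leibniz f g

theorem PowerSeries.derivative_map {R S : Type*} [CommSemiring R] [CommSemiring S] (f : R →+* S)
    (g : PowerSeries R) : d⁄dX S (g.map f) = (d⁄dX R g).map f := by
  ext n
  simp [PowerSeries.coeff_derivative]

section Appell

variable {ι K : Type*} [Fintype ι] [Field K]

/-- `exp (X t) ∏ (1 - μ_i t)`, a power series in `t` over `K[X]`. -/
noncomputable def appellSeries (μ : ι → K) : PowerSeries K[X] :=
  (PowerSeries.mk (signedEsymm μ)).map C * PowerSeries.mk fun j => C ((j ! : K)⁻¹) * X ^ j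

theorem coeff_zero_appellSeries (μ : ι → K) : PowerSeries.coeff 0 (appellSeries μ) = 1 := by
  simp [appellSeries, PowerSeries.coeff_mul, signedEsymm_zero]

theorem derivative_mk_inv_factorial_mul_X_pow [CharZero K] :
    d⁄dX K[X] (PowerSeries.mk fun j => C ((j ! : K)⁻¹) * X ^ j) =
      PowerSeries.C X * PowerSeries.mk fun j => C ((j ! : K)⁻¹) * X ^ j := by
  refine PowerSeries.ext fun n => ?_
  have h := congrArg C (inv_mul_cancel₀ (n.cast_add_one_ne_zero : (n + 1 : K) ≠ 0))
  rw [map_mul, map_one, map_add, map_natCast, map_one] at h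
  simp only [PowerSeries.coeff_derivative, PowerSeries.coeff_mk, PowerSeries.coeff_C_mul,
    Nat.factorial_succ, Nat.cast_mul, Nat.cast_succ, mul_inv, map_mul, pow_succ]
  linear_combination (C ((n ! : K)⁻¹) * X ^ n * X) * h

theorem coeff_succ_appellSeries [CharZero K] (μ : ι → K) (m : ℕ) :
    (m + 1 : K[X]) * PowerSeries.coeff (m + 1) (appellSeries μ) =
      X * PowerSeries.coeff m (appellSeries μ) - ∑ j ∈ range (m + 1),
        C (∑ i, μ i ^ (m - j + 1)) * PowerSeries.coeff j (appellSeries μ) := by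
  have hA : d⁄dX K[X] (appellSeries μ) = appellSeries μ *
      (PowerSeries.C X - (PowerSeries.mk fun d => ∑ i, μ i ^ (d + 1)).map C) := by
    rw [appellSeries, PowerSeries.derivative_mul, PowerSeries.derivative_map,
      derivative_mk_signedEsymm, derivative_mk_inv_factorial_mul_X_pow]
    simp only [map_neg, map_mul]
    ring
  have h := congrArg (PowerSeries.coeff m) hA
  rw [PowerSeries.coeff_derivative, mul_sub, map_sub, mul_comm _ (PowerSeries.C X),
    PowerSeries.coeff_C_mul, PowerSeries.coeff_mul, Nat.sum_antidiagonal_eq_sum_range_succ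
      (fun j l => PowerSeries.coeff j (appellSeries μ) * PowerSeries.coeff l _)] at h
  simp only [PowerSeries.coeff_map, PowerSeries.coeff_mk] at h
  rw [mul_comm, h]
  exact congrArg _ (sum_congr rfl fun j _ => mul_comm _ _)

theorem factorial_mul_coeff_appellSeries [CharZero K] (μ : ι → K) (m : ℕ) :
    (m ! : K[X]) * PowerSeries.coeff m (appellSeries μ) =
      ∑ k ∈ range (m + 1), C (m.descFactorial k * signedEsymm μ k) * X ^ (m - k) := by
  rw [appellSeries, PowerSeries.coeff_mul, Nat.sum_antidiagonal_eq_sum_range_succ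
    (fun k l => PowerSeries.coeff k (PowerSeries.map C _) * PowerSeries.coeff l _), mul_sum]
  refine sum_congr rfl fun k hk => ?_
  have hfac := Nat.factorial_mul_descFactorial (Nat.lt_succ_iff.mp (mem_range.mp hk))
  have hne : ((m - k)! : K) ≠ 0 := Nat.cast_ne_zero.mpr (Nat.factorial_ne_zero _)
  simp only [PowerSeries.coeff_map, PowerSeries.coeff_mk, ← hfac, Nat.cast_mul, ← map_natCast C,
    ← mul_assoc, ← map_mul]
  congr 2
  field_simp

end Appell

/-- Cramer's rule for the first unknown: expanding along the first column, the only surviving minor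
is lower triangular, with the superdiagonal of `M` on its diagonal. -/
theorem Matrix.det_mul_apply_zero_of_mulVec_eq_single {R : Type*} [CommRing R] {N : ℕ}
    {M : Matrix (Fin (N + 1)) (Fin (N + 1)) R}
    (hM : ∀ i j : Fin (N + 1), (i : ℕ) + 1 < j → M i j = 0)
    {v : Fin (N + 1) → R} {r : R} (hv : M *ᵥ v = Pi.single (Fin.last N) r) :
    M.det * v 0 = r * ∏ i : Fin N, -M i.castSucc i.succ := by
  have hcramer : M.det * v 0 = (M.updateCol 0 (M *ᵥ v)).det := by
    rw [← cramer_apply, cramer_eq_adjugate_mulVec, mulVec_mulVec, adjugate_mul, smul_mulVec,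
      one_mulVec, Pi.smul_apply, smul_eq_mul]
  have hlower : (M.submatrix Fin.castSucc Fin.succ).IsLowerTriangular := fun i j hij =>
    hM _ _ (by simpa using hij)
  rw [hcramer, hv, det_succ_column_zero, Fintype.sum_eq_single (Fin.last N)]
  · have hminor : (M.updateCol 0 (Pi.single (Fin.last N) r)).submatrix (Fin.last N).succAbove
        Fin.succ = M.submatrix Fin.castSucc Fin.succ := by
      ext i j
      simp [Fin.succAbove_last]
    rw [hminor, det_of_isLowerTriangular _ hlower, prod_neg, card_univ, Fintype.card_fin]
    simp only [Fin.val_last, updateCol_self, Pi.single_eq_same, submatrix_apply]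
    ring
  · intro i hi
    simp [Pi.single_eq_of_ne hi]

section NewtonMatrix

variable {R : Type*}

def newtonMatrix [Semiring R] (n : ℕ) (x : ℕ → R) : Matrix (Fin n) (Fin n) R :=
  of fun i j =>
    (if (j : ℕ) ≤ i then x (i - j + 1) else 0) + if (j : ℕ) = i + 1 then (j : R) else 0

theorem newtonMatrix_nonneg [Semiring R] [PartialOrder R] [IsOrderedRing R] {n : ℕ}
    {x : ℕ → R} (hx : ∀ k ∈ Icc 1 n, 0 ≤ x k) (i j : Fin n) :
    0 ≤ newtonMatrix n x i j := by
  refine add_nonneg ?_ ?_ <;> split_ifs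
  · exact hx _ (mem_Icc.mpr ⟨by omega, by omega⟩)
  all_goals positivity

theorem newtonMatrix_congr [Semiring R] {n : ℕ} {x y : ℕ → R}
    (h : ∀ k ∈ Icc 1 n, x k = y k) : newtonMatrix n x = newtonMatrix n y := by
  ext i j
  simp only [newtonMatrix, of_apply]
  congr 1
  split_ifs
  · exact h _ (mem_Icc.mpr ⟨by omega, by omega⟩)
  · rfl

theorem newtonMatrix_map {S : Type*} [Semiring R] [Semiring S] (f : R →+* S) (n : ℕ)
    (x : ℕ → R) : (newtonMatrix n x).map f = newtonMatrix n (f ∘ x) := by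
  ext i j
  simp only [newtonMatrix, map_apply, of_apply, map_add, apply_ite f, map_zero, map_natCast,
    Function.comp_apply]

theorem newtonMatrix_mulVec_apply [Semiring R] {n : ℕ} (x v : ℕ → R) (i : Fin n) :
    (newtonMatrix n x *ᵥ fun j => v j) i = ∑ j ∈ range (i + 1), x (i - j + 1) * v j +
      if (i : ℕ) + 1 < n then ((i + 1 : ℕ) : R) * v (i + 1) else 0 := by
  simp only [mulVec, dotProduct, newtonMatrix, of_apply, add_mul, ite_mul, zero_mul,
    sum_add_distrib]
  rw [Fin.sum_univ_eq_sum_range (fun j => if j ≤ i then x (i - j + 1) * v j else 0),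
    Fin.sum_univ_eq_sum_range (fun j => if j = i + 1 then (j : R) * v j else 0), sum_ite_eq',
    ← sum_filter]
  simp only [mem_range]
  congr 2
  ext j
  simp only [mem_filter, mem_range]
  omega

theorem charmatrix_newtonMatrix_mulVec [CommRing R] {N : ℕ} (x : ℕ → R) {v : ℕ → R[X]}
    (hv : ∀ m : ℕ, (m + 1 : R[X]) * v (m + 1) =
      X * v m - ∑ j ∈ range (m + 1), C (x (m - j + 1)) * v j) :
    charmatrix (newtonMatrix (N + 1) x) *ᵥ (fun j => v j) =
      Pi.single (Fin.last N) ((N + 1 : R[X]) * v (N + 1)) := by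
  funext i
  have hrow : (charmatrix (newtonMatrix (N + 1) x) *ᵥ fun j => v j) i =
      X * v i - (newtonMatrix (N + 1) (C ∘ x) *ᵥ fun j => v j) i := by
    rw [charmatrix, sub_mulVec, ← newtonMatrix_map]
    simp
  rw [hrow, newtonMatrix_mulVec_apply]
  simp only [Function.comp_apply]
  rcases Fin.eq_castSucc_or_eq_last i with ⟨i, rfl⟩ | rfl
  · rw [if_pos (by simp), Pi.single_eq_of_ne (Fin.castSucc_ne_last i)]
    simp only [Fin.val_castSucc, Nat.cast_add, Nat.cast_one]
    linear_combination -hv i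
  · rw [if_neg (by simp), Pi.single_eq_same]
    simp only [Fin.val_last, add_zero]
    linear_combination -hv N

theorem charpoly_newtonMatrix [CommRing R] {N : ℕ} (x : ℕ → R) {v : ℕ → R[X]}
    (hv₀ : v 0 = 1) (hv : ∀ m : ℕ, (m + 1 : R[X]) * v (m + 1) =
      X * v m - ∑ j ∈ range (m + 1), C (x (m - j + 1)) * v j) :
    (newtonMatrix (N + 1) x).charpoly = ((N + 1)! : R[X]) * v (N + 1) := by
  have hhess : ∀ i j : Fin (N + 1), (i : ℕ) + 1 < j →
      charmatrix (newtonMatrix (N + 1) x) i j = 0 := by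
    intro i j hij
    have h₁ : ¬(j : ℕ) ≤ i := by omega
    have h₂ : ¬(j : ℕ) = i + 1 := by omega
    rw [charmatrix_apply_ne _ _ _ (by omega)]
    simp only [newtonMatrix, of_apply, if_neg h₁, if_neg h₂, add_zero, map_zero, neg_zero]
  have hsuper : ∀ i : Fin N,
      -charmatrix (newtonMatrix (N + 1) x) i.castSucc i.succ = ((i + 1 : ℕ) : R[X]) := by
    intro i
    rw [charmatrix_apply_ne _ _ _ (Fin.castSucc_lt_succ (i := i)).ne]
    simp [newtonMatrix]
  have hdet := det_mul_apply_zero_of_mulVec_eq_single hhess (charmatrix_newtonMatrix_mulVec x hv)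
  rw [Fin.val_zero, hv₀, mul_one] at hdet
  rw [charpoly, hdet, Fintype.prod_congr _ _ hsuper,
    Fin.prod_univ_eq_prod_range (fun i => ((i + 1 : ℕ) : R[X])), ← Nat.cast_prod,
    prod_range_add_one_eq_factorial, Nat.factorial_succ]
  push_cast
  ring

end NewtonMatrix

theorem charpoly_newtonMatrix_powerSums {K : Type*} [Field K] [CharZero K] {n : ℕ}
    (μ : Fin n → K) :
    (newtonMatrix n fun k => ∑ i, μ i ^ k).charpoly = X ^ n + ∑ k ∈ Icc 1 n,
      C ((n.descFactorial k : K) * (∏ i, (X - C (μ i))).coeff (n - k)) * X ^ (n - k) := by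
  cases n with
  | zero => simp [charpoly_isEmpty]
  | succ N =>
    have hrange : range (N + 1 + 1) = insert 0 (Icc 1 (N + 1)) := by
      ext k
      simp only [mem_range, mem_insert, mem_Icc]
      omega
    rw [charpoly_newtonMatrix (fun k => ∑ i, μ i ^ k)
        (v := fun m => PowerSeries.coeff m (appellSeries μ))
        (coeff_zero_appellSeries μ) (coeff_succ_appellSeries μ),
      factorial_mul_coeff_appellSeries, hrange, sum_insert (by simp)]
    refine congrArg₂ _ (by simp [signedEsymm_zero]) (sum_congr rfl fun k hk => ?_)
    have h := prod_X_sub_C_coeff_card_sub μ (k := k)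
      (by rw [Fintype.card_fin]; exact (mem_Icc.mp hk).2)
    rw [Fintype.card_fin] at h
    rw [h]

/-- If all power sums x₁,...,xₙ of the roots μ₁,...,μₙ of the monic polynomial q are
    nonnegative reals, then the roots of Q(x) = x^n + Σ n(n-1)⋯(n-k+1) q_k x^{n-k}
    form the spectrum of an entrywise nonnegative real matrix. -/
theorem realizable_of_nonneg_power_sums (n : ℕ) (μ : Fin n → ℂ)
    (h : ∀ k ∈ Finset.Icc 1 n, 0 ≤ (∑ i, μ i ^ k).re ∧ (∑ i, μ i ^ k).im = 0) :
    ∃ A : Matrix (Fin n) (Fin n) ℝ, (∀ i j, 0 ≤ A i j) ∧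
      (A.map Complex.ofReal).charpoly =
        X ^ n + ∑ k ∈ Finset.Icc 1 n,
          C ((n.descFactorial k : ℂ) * (∏ i, (X - C (μ i))).coeff (n - k)) * X ^ (n - k) := by
  refine ⟨newtonMatrix n fun k => (∑ i, μ i ^ k).re,
    newtonMatrix_nonneg fun k hk => (h k hk).1, ?_⟩
  have hreal : ∀ k ∈ Icc 1 n, Complex.ofRealHom (∑ i, μ i ^ k).re = ∑ i, μ i ^ k :=
    fun k hk => Complex.ext rfl (by simp [(h k hk).2])
  rw [← charpoly_newtonMatrix_powerSums, ← newtonMatrix_congr hreal]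
  exact congrArg charpoly (newtonMatrix_map Complex.ofRealHom n _)
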